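/- Let H be a real Hilbert space, let V_j for j in a finite index set J be closed subspaces, and let V = ∑_{j∈J} V_j (assumed closed). Suppose there exists ψ_J ∈ (0,1] such that ‖∑_{j∈J} g_j‖² ≥ ψ_J² ∑_{j∈J} ‖g_j‖² for all choices g_j ∈ V_j. Then for every f in a finite-dimensional situation where each V_j is finite-dimensional, the orthogonal projection satisfies ‖Π_V f‖² ≤ ψ_J^{−2} ∑_{j∈J} ‖Π_{V_j} f‖². -/

import Mathlib

open Finset

/-! Write `Π_V f = ∑ j, g j` with `g j ∈ V j`. Since `f - Π_{V j} f ⟂ V j`, we get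
`‖Π_V f‖² = ⟪f, Π_V f⟫ = ∑ j, ⟪Π_{V j} f, g j⟫`, so by Cauchy–Schwarz
`‖Π_V f‖⁴ ≤ (∑ j, ‖Π_{V j} f‖²) (∑ j, ‖g j‖²)`, and the stability hypothesis bounds the last
factor by `ψ⁻² ‖Π_V f‖²`. -/

theorem Submodule.inner_starProjection_left_eq_of_mem {𝕜 E : Type*} [RCLike 𝕜]
    [NormedAddCommGroup E] [InnerProductSpace 𝕜 E] (K : Submodule 𝕜 E) [K.HasOrthogonalProjection]
    (f : E) {x : E} (hx : x ∈ K) : inner 𝕜 (K.starProjection f) x = inner 𝕜 f x :=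
  K.inner_orthogonalProjectionOnto_eq_of_mem_right ⟨x, hx⟩ f

section Real

variable {H J : Type*} [NormedAddCommGroup H] [InnerProductSpace ℝ H]

theorem sq_sum_real_inner_le (s : Finset J) (a b : J → H) :
    (∑ j ∈ s, inner ℝ (a j) (b j)) ^ 2 ≤ (∑ j ∈ s, ‖a j‖ ^ 2) * ∑ j ∈ s, ‖b j‖ ^ 2 := by
  have h_abs : |∑ j ∈ s, inner ℝ (a j) (b j)| ≤ ∑ j ∈ s, ‖a j‖ * ‖b j‖ :=
    (abs_sum_le_sum_abs _ _).trans (sum_le_sum fun j _ => abs_real_inner_le_norm _ _)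
  calc (∑ j ∈ s, inner ℝ (a j) (b j)) ^ 2
      ≤ (∑ j ∈ s, ‖a j‖ * ‖b j‖) ^ 2 := sq_le_sq' (abs_le.mp h_abs).1 (abs_le.mp h_abs).2
    _ ≤ (∑ j ∈ s, ‖a j‖ ^ 2) * ∑ j ∈ s, ‖b j‖ ^ 2 := sum_mul_sq_le_sq_mul_sq _ _ _

theorem Submodule.norm_sq_starProjection_eq_sum_inner [Fintype J] (U : Submodule ℝ H)
    [U.HasOrthogonalProjection] (V : J → Submodule ℝ H) [∀ j, (V j).HasOrthogonalProjection]
    (f : H) {g : J → H} (hg : ∀ j, g j ∈ V j) (hsum : ∑ j, g j = U.starProjection f) :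
    ‖U.starProjection f‖ ^ 2 = ∑ j, inner ℝ ((V j).starProjection f) (g j) := by
  calc ‖U.starProjection f‖ ^ 2
      = inner ℝ (U.starProjection f) (U.starProjection f) := (real_inner_self_eq_norm_sq _).symm
    _ = inner ℝ f (∑ j, g j) := by
        rw [U.inner_starProjection_left_eq_of_mem f (U.starProjection_apply_mem f), hsum]
    _ = ∑ j, inner ℝ ((V j).starProjection f) (g j) := by
        rw [inner_sum]
        exact sum_congr rfl fun j _ => ((V j).inner_starProjection_left_eq_of_mem f (hg j)).symm

end Real

theorem le_inv_mul_of_sq_le_mul_of_mul_le {x S G c : ℝ} (hS : 0 ≤ S) (hc : 0 < c)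
    (hsq : x ^ 2 ≤ S * G) (hG : c * G ≤ x) : x ≤ c⁻¹ * S := by
  rw [← div_eq_inv_mul, le_div_iff₀ hc]
  rcases le_or_gt x 0 with hx | hx
  · nlinarith
  · nlinarith [mul_le_mul_of_nonneg_left hG hS]

theorem stmt_8_general {H : Type*} [NormedAddCommGroup H] [InnerProductSpace ℝ H]
    {J : Type*} [Fintype J] (V : J → Submodule ℝ H)
    [∀ j, Submodule.HasOrthogonalProjection (V j)] [Submodule.HasOrthogonalProjection (⨆ j, V j)]
    (ψ : ℝ) (hψ0 : 0 < ψ)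
    (hre : ∀ g : J → H, (∀ j, g j ∈ V j) →
      ψ ^ 2 * ∑ j, ‖g j‖ ^ 2 ≤ ‖∑ j, g j‖ ^ 2) :
    ∀ f : H, ‖(((⨆ j, V j).orthogonalProjectionOnto f : _) : H)‖ ^ 2 ≤
      (ψ ^ 2)⁻¹ * ∑ j, ‖(((V j).orthogonalProjectionOnto f : _) : H)‖ ^ 2 := by
  intro f
  simp only [← Submodule.starProjection_apply]
  obtain ⟨g, hg, hgsum⟩ := (Submodule.mem_iSup_iff_exists_finsupp V _).mp
    ((⨆ j, V j).starProjection_apply_mem f)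
  have hsum : ∑ j, g j = (⨆ j, V j).starProjection f := by
    rw [← hgsum, Finsupp.sum_fintype _ _ fun _ => rfl]
  have hstable := hre g hg
  rw [hsum] at hstable
  refine le_inv_mul_of_sq_le_mul_of_mul_le (sum_nonneg fun j _ => sq_nonneg _) (by positivity)
    ?_ hstable
  rw [Submodule.norm_sq_starProjection_eq_sum_inner _ V f hg hsum]
  exact sq_sum_real_inner_le _ _ _

/-- Projection comparison: if the finite-dimensional subspaces `V j` satisfy
`‖∑ g j‖² ≥ ψ² ∑ ‖g j‖²` for all choices `g j ∈ V j`, then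
`‖Π_V f‖² ≤ ψ⁻² ∑ j ‖Π_{V j} f‖²` where `V = ∑ j V j`. -/
theorem stmt_8 {H : Type*} [NormedAddCommGroup H] [InnerProductSpace ℝ H] [CompleteSpace H]
    {J : Type*} [Fintype J] (V : J → Submodule ℝ H) [∀ j, FiniteDimensional ℝ (V j)]
    [∀ j, Submodule.HasOrthogonalProjection (V j)] [Submodule.HasOrthogonalProjection (⨆ j, V j)]
    (ψ : ℝ) (hψ0 : 0 < ψ) (hψ1 : ψ ≤ 1)
    (hre : ∀ g : J → H, (∀ j, g j ∈ V j) →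
      ψ ^ 2 * ∑ j, ‖g j‖ ^ 2 ≤ ‖∑ j, g j‖ ^ 2) :
    ∀ f : H, ‖(((⨆ j, V j).orthogonalProjectionOnto f : _) : H)‖ ^ 2 ≤
      (ψ ^ 2)⁻¹ * ∑ j, ‖(((V j).orthogonalProjectionOnto f : _) : H)‖ ^ 2 :=
  stmt_8_general V ψ hψ0 hre
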